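/- arXiv:1111.1334 — 5 statements merged into one kernel-verified Lean document; each statement's English description precedes it below -/
import Mathlib

section
/- A symmetric bilinear form β on the hyperplane D* = {ξ ∈ ℝ^n : Σξ_i = 0} arises as β(ξ,η) = Σ_{i,j} ⟨r_i, r_j⟩ ξ_i η_j for some points r_1,...,r_n in some Euclidean space if and only if β is positive semidefinite. -/
/-!
Diagonalising a positive semidefinite form `β` on a finite-dimensional space `V` in a
`β`-orthogonal basis `vₖ` writes it as `β x y = ⟪g x, g y⟫` with `g x = (√β(vₖ, vₖ) · xₖ)ₖ`.
Applied to the restriction of `β` to `D*`, precomposed with any linear projection of `ℝⁿ` onto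
`D*`, this gives a linear `G : ℝⁿ → ℝ^(dim D*)`, and the points are `rᵢ = G eᵢ`.
Conversely `∑ᵢⱼ ⟪rᵢ, rⱼ⟫ ξᵢ ξⱼ = ‖∑ᵢ ξᵢ rᵢ‖² ≥ 0`.
-/

open scoped RealInnerProductSpace
open Module

theorem LinearMap.IsPosSemidef.exists_eq_inner {V : Type*} [AddCommGroup V] [Module ℝ V]
    [FiniteDimensional ℝ V] {B : V →ₗ[ℝ] V →ₗ[ℝ] ℝ} (hB : B.IsPosSemidef) :
    ∃ g : V →ₗ[ℝ] EuclideanSpace ℝ (Fin (finrank ℝ V)), ∀ x y, B x y = ⟪g x, g y⟫ := by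
  obtain ⟨v, hv⟩ := LinearMap.BilinForm.exists_orthogonal_basis hB.isSymm
  let g : V →ₗ[ℝ] EuclideanSpace ℝ (Fin (finrank ℝ V)) :=
    (EuclideanSpace.equiv _ ℝ).symm.toLinearMap ∘ₗ
      LinearMap.pi fun i => √(B (v i) (v i)) • v.coord i
  have hg : ∀ i, g (v i) = EuclideanSpace.single i √(B (v i) (v i)) := by
    intro i
    ext j
    obtain rfl | hij := eq_or_ne i j
    · simp [g]
    · simp [g, hij.symm]
  suffices B = (innerₗ _).compl₁₂ g g from ⟨g, fun x y => by rw [this]; rfl⟩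
  refine LinearMap.BilinForm.ext_basis v fun i j => ?_
  simp only [LinearMap.compl₁₂_apply, innerₗ_apply_apply, hg,
    EuclideanSpace.inner_single_left, PiLp.single_apply]
  obtain rfl | hij := eq_or_ne i j
  · simp [Real.mul_self_sqrt (hB.nonneg (v i))]
  · simp [hv hij, hij]

theorem sum_sum_inner_mul_mul {ι E : Type*} [Fintype ι] [NormedAddCommGroup E]
    [InnerProductSpace ℝ E] (r : ι → E) (ξ η : ι → ℝ) :
    ∑ i, ∑ j, ⟪r i, r j⟫ * ξ i * η j = ⟪∑ i, ξ i • r i, ∑ j, η j • r j⟫ := by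
  simp_rw [sum_inner, inner_sum, real_inner_smul_left, real_inner_smul_right]
  exact Fintype.sum_congr _ _ fun i => Fintype.sum_congr _ _ fun j => by ring

theorem LinearMap.exists_sum_sum_inner_mul_mul_of_nonneg {ι : Type*} [Fintype ι]
    (β : (ι → ℝ) →ₗ[ℝ] (ι → ℝ) →ₗ[ℝ] ℝ) (hsymm : ∀ ξ η, β ξ η = β η ξ)
    (S : Submodule ℝ (ι → ℝ)) (hpos : ∀ ξ ∈ S, 0 ≤ β ξ ξ) :
    ∃ r : ι → EuclideanSpace ℝ (Fin (finrank ℝ S)),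
      ∀ ξ ∈ S, ∀ η ∈ S, β ξ η = ∑ i, ∑ j, ⟪r i, r j⟫ * ξ i * η j := by
  classical
  have hS : (β.domRestrict₁₂ S S).IsPosSemidef :=
    ⟨⟨fun x y => hsymm x y⟩, ⟨fun x => hpos x x.2⟩⟩
  obtain ⟨g, hg⟩ := hS.exists_eq_inner
  obtain ⟨p, hp⟩ := S.subtype.exists_leftInverse_of_injective S.ker_subtype
  have hpS : ∀ ξ (hξ : ξ ∈ S), p ξ = ⟨ξ, hξ⟩ := fun ξ hξ => LinearMap.congr_fun hp ⟨ξ, hξ⟩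
  have hexp : ∀ x : ι → ℝ, g (p x) = ∑ i, x i • g (p (Pi.single i 1)) := fun x => by
    simpa [← Pi.single_apply, Pi.single_comm] using (g ∘ₗ p).pi_apply_eq_sum_univ x
  refine ⟨fun i => g (p (Pi.single i 1)), fun ξ hξ η hη => ?_⟩
  rw [sum_sum_inner_mul_mul, ← hexp, ← hexp, hpS ξ hξ, hpS η hη, ← hg]
  rfl

def zeroSumSubspace (ι : Type*) [Fintype ι] : Submodule ℝ (ι → ℝ) :=
  LinearMap.ker (∑ i, LinearMap.proj i)

theorem mem_zeroSumSubspace {ι : Type*} [Fintype ι] {ξ : ι → ℝ} :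
    ξ ∈ zeroSumSubspace ι ↔ ∑ i, ξ i = 0 := by
  simp [zeroSumSubspace]

theorem finrank_zeroSumSubspace_le (ι : Type*) [Fintype ι] :
    finrank ℝ (zeroSumSubspace ι) ≤ Fintype.card ι - 1 := by
  rcases isEmpty_or_nonempty ι with hι | hι
  · simpa using (zeroSumSubspace ι).finrank_le
  have hne : zeroSumSubspace ι ≠ ⊤ := fun htop => by
    have h1 : (fun _ => 1 : ι → ℝ) ∈ zeroSumSubspace ι := htop ▸ Submodule.mem_top
    simp [mem_zeroSumSubspace] at h1
  have := Submodule.finrank_lt hne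
  rw [finrank_fintype_fun_eq_card] at this
  omega

theorem stmt1 (n : ℕ) (β : (Fin n → ℝ) →ₗ[ℝ] (Fin n → ℝ) →ₗ[ℝ] ℝ)
    (hsymm : ∀ ξ η, β ξ η = β η ξ) :
    (∃ d : ℕ, d ≤ n - 1 ∧ ∃ r : Fin n → EuclideanSpace ℝ (Fin d),
        ∀ ξ η : Fin n → ℝ, (∑ i, ξ i = 0) → (∑ i, η i = 0) →
          β ξ η = ∑ i, ∑ j, ⟪r i, r j⟫ * ξ i * η j) ↔
      (∀ ξ : Fin n → ℝ, (∑ i, ξ i = 0) → 0 ≤ β ξ ξ) := by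
  constructor
  · rintro ⟨d, -, r, hr⟩ ξ hξ
    rw [hr ξ ξ hξ hξ, sum_sum_inner_mul_mul]
    exact real_inner_self_nonneg
  · intro hpos
    obtain ⟨r, hr⟩ := β.exists_sum_sum_inner_mul_mul_of_nonneg hsymm (zeroSumSubspace (Fin n))
      fun ξ hξ => hpos ξ (mem_zeroSumSubspace.mp hξ)
    refine ⟨_, by simpa using finrank_zeroSumSubspace_le (Fin n), r, fun ξ η hξ hη => ?_⟩
    exact hr ξ (mem_zeroSumSubspace.mpr hξ) η (mem_zeroSumSubspace.mpr hη)
end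

section
/- For the homogeneous potential U = Σ_{i<j} m_i m_j r_{ij}^{2κ} with κ = −1 (Jacobi–Banachiewicz potential), along any solution of the corresponding n-body equations the second derivative of the moment of inertia I satisfies Ï = 4H, where H = K/2 − U is the constant total energy; consequently G = 2IH − J², with J = İ/2, is a first integral. -/
/-!
Write `İ = 2 Σ mᵢ ⟪rᵢ, ṙᵢ⟫`, so `Ï = 2K + 2 Σ ⟪rᵢ, mᵢ r̈ᵢ⟫ = 2K + 2 Σ ⟪rᵢ, ∇ᵢU⟫`.
Since `U` is homogeneous of degree `-2`, Euler's relation gives `Σ ⟪rᵢ, ∇ᵢU⟫ = -2U`, hence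
`Ï = 2K - 4U = 4H`. Energy is conserved because `U̇ = Σ ⟪ṙᵢ, mᵢ r̈ᵢ⟫ = K̇ / 2`. Finally, with
`J = İ / 2` and `J̇ = 2H`, one gets `d/dt (2IH - J²) = 2İH - 2J J̇ = 0`.
-/

open Finset
open scoped RealInnerProductSpace

theorem Finset.sum_sum_erase_eq_sum_sum_lt {ι M : Type*} [Fintype ι] [LinearOrder ι]
    [AddCommMonoid M] (f : ι → ι → M) :
    ∑ i, ∑ j ∈ univ.erase i, f i j = ∑ i, ∑ j ∈ univ.filter (fun j => i < j), (f i j + f j i) := by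
  have hsplit : ∀ i, ∑ j ∈ univ.erase i, f i j
      = ∑ j ∈ univ.filter (fun j => i < j), f i j + ∑ j ∈ univ.filter (fun j => j < i), f i j := by
    intro i
    rw [← sum_filter_add_sum_filter_not (univ.erase i) (fun j => i < j)]
    congr 1 <;> apply sum_congr _ (fun _ _ => rfl) <;> ext j <;>
      simp only [mem_filter, mem_erase, mem_univ, and_true] <;> grind
  simp only [hsplit, sum_add_distrib]
  exact congrArg _ (sum_comm' fun _ _ => by simp)

section JacobiPotential

variable {ι E : Type*} [Fintype ι] [LinearOrder ι] [NormedAddCommGroup E] [InnerProductSpace ℝ E]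

noncomputable def jacobiPotential (m : ι → ℝ) (x : ι → E) : ℝ :=
  ∑ i, ∑ j ∈ univ.filter (fun j => i < j), m i * m j / ‖x i - x j‖ ^ 2

/-- `(1 / mᵢ) ∇_{xᵢ} (jacobiPotential m x)`, the right-hand side of the equations of motion. -/
noncomputable def jacobiAccel (m : ι → ℝ) (x : ι → E) (i : ι) : E :=
  ∑ j ∈ univ.erase i, (2 * m j / ‖x i - x j‖ ^ 4) • (x j - x i)

theorem sum_mul_inner_jacobiAccel (m : ι → ℝ) (x w : ι → E) :
    ∑ i, m i * ⟪w i, jacobiAccel m x i⟫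
      = -∑ i, ∑ j ∈ univ.filter (fun j => i < j),
          2 * m i * m j / ‖x i - x j‖ ^ 4 * ⟪w i - w j, x i - x j⟫ := by
  simp only [jacobiAccel, inner_sum, real_inner_smul_right, mul_sum]
  rw [sum_sum_erase_eq_sum_sum_lt, ← sum_neg_distrib]
  refine sum_congr rfl fun i _ => ?_
  rw [← sum_neg_distrib]
  refine sum_congr rfl fun j _ => ?_
  simp only [norm_sub_rev (x j), inner_sub_left, inner_sub_right]
  ring

/-- Euler's relation for the potential, which is homogeneous of degree `-2`. -/
theorem sum_mul_inner_self_jacobiAccel (m : ι → ℝ) {x : ι → E} (hx : Function.Injective x) :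
    ∑ i, m i * ⟪x i, jacobiAccel m x i⟫ = -2 * jacobiPotential m x := by
  rw [sum_mul_inner_jacobiAccel, jacobiPotential, mul_sum, ← sum_neg_distrib]
  refine sum_congr rfl fun i _ => ?_
  rw [mul_sum, ← sum_neg_distrib]
  refine sum_congr rfl fun j hj => ?_
  have hd : ‖x i - x j‖ ≠ 0 :=
    norm_ne_zero_iff.mpr (sub_ne_zero.mpr (hx.ne (mem_filter.mp hj).2.ne))
  rw [real_inner_self_eq_norm_sq]
  field_simp

theorem hasDerivAt_jacobiPotential (m : ι → ℝ) {x : ι → ℝ → E} {v : ι → E} {t : ℝ}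
    (hx : ∀ i, HasDerivAt (x i) (v i) t) (hinj : Function.Injective (x · t)) :
    HasDerivAt (fun s => jacobiPotential m (x · s))
      (∑ i, m i * ⟪v i, jacobiAccel m (x · t) i⟫) t := by
  rw [sum_mul_inner_jacobiAccel, ← sum_neg_distrib]
  refine HasDerivAt.fun_sum fun i _ => ?_
  rw [← sum_neg_distrib]
  refine HasDerivAt.fun_sum fun j hj => ?_
  have hd : ‖x i t - x j t‖ ^ 2 ≠ 0 :=
    pow_ne_zero _ (norm_ne_zero_iff.mpr (sub_ne_zero.mpr (hinj.ne (mem_filter.mp hj).2.ne)))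
  refine ((hasDerivAt_const t (m i * m j)).div ((hx i).sub (hx j)).norm_sq hd).congr_deriv ?_
  rw [Pi.sub_apply, real_inner_comm]
  ring

end JacobiPotential

theorem HasDerivAt.sum_mul_norm_sq {ι E : Type*} [Fintype ι] [NormedAddCommGroup E]
    [InnerProductSpace ℝ E] (m : ι → ℝ) {x : ι → ℝ → E} {v : ι → E} {t : ℝ}
    (hx : ∀ i, HasDerivAt (x i) (v i) t) :
    HasDerivAt (fun s => ∑ i, m i * ‖x i s‖ ^ 2) (2 * ∑ i, m i * ⟪x i t, v i⟫) t := by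
  rw [mul_sum]
  refine HasDerivAt.fun_sum fun i _ => ((hx i).norm_sq.const_mul (m i)).congr_deriv ?_
  ring

theorem hasDerivAt_two_mul_mul_sub_half_sq {I D H : ℝ → ℝ} {t : ℝ}
    (hI : HasDerivAt I (D t) t) (hD : HasDerivAt D (4 * H t) t) (hH : HasDerivAt H 0 t) :
    HasDerivAt (fun s => 2 * I s * H s - (D s / 2) ^ 2) 0 t := by
  refine (((hI.const_mul 2).mul hH).sub ((hD.div_const 2).pow 2)).congr_deriv ?_
  ring

theorem stmt6_general {E : Type*} [NormedAddCommGroup E] [InnerProductSpace ℝ E]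
    (n : ℕ) (m : Fin n → ℝ)
    (r : Fin n → ℝ → E) (hsm : ∀ i, ContDiff ℝ 2 (r i))
    (hsep : ∀ t, ∀ i j, i ≠ j → r i t ≠ r j t)
    (hode : ∀ i t, deriv (deriv (r i)) t
      = ∑ j ∈ Finset.univ.erase i,
          (2 * m j / ‖r i t - r j t‖ ^ 4) • (r j t - r i t)) :
    (∀ t, deriv (deriv (fun s => ∑ i, m i * ‖r i s‖ ^ 2)) t
        = 4 * ((∑ i, m i * ‖deriv (r i) t‖ ^ 2) / 2
            - ∑ i, ∑ j ∈ Finset.univ.filter (fun j => i < j),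
                m i * m j / ‖r i t - r j t‖ ^ 2)) ∧
    (∀ t, deriv (fun s =>
        2 * (∑ i, m i * ‖r i s‖ ^ 2) *
          ((∑ i, m i * ‖deriv (r i) s‖ ^ 2) / 2
            - ∑ i, ∑ j ∈ Finset.univ.filter (fun j => i < j),
                m i * m j / ‖r i s - r j s‖ ^ 2)
        - (deriv (fun u => ∑ i, m i * ‖r i u‖ ^ 2) s / 2) ^ 2) t = 0) := by
  have hinj : ∀ t, Function.Injective (r · t) := fun t i j h =>
    by_contra fun hij => hsep t i j hij h
  have hv : ∀ i t, HasDerivAt (r i) (deriv (r i) t) t := fun i t =>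
    ((hsm i).differentiable (by norm_num) t).hasDerivAt
  have ha : ∀ i t, HasDerivAt (deriv (r i)) (jacobiAccel m (r · t) i) t := fun i t => by
    rw [jacobiAccel, ← hode i t]
    exact ((hsm i).iterate_deriv' 1 1 |>.differentiable one_ne_zero t).hasDerivAt
  set H : ℝ → ℝ := fun s => (∑ i, m i * ‖deriv (r i) s‖ ^ 2) / 2 - jacobiPotential m (r · s)
  have hI : ∀ t, HasDerivAt (fun s => ∑ i, m i * ‖r i s‖ ^ 2)
      (2 * ∑ i, m i * ⟪r i t, deriv (r i) t⟫) t := fun t =>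
    HasDerivAt.sum_mul_norm_sq m (hv · t)
  have hdI : deriv (fun s => ∑ i, m i * ‖r i s‖ ^ 2)
      = fun t => 2 * ∑ i, m i * ⟪r i t, deriv (r i) t⟫ := funext fun t => (hI t).deriv
  have hI' : ∀ t, HasDerivAt (fun s => 2 * ∑ i, m i * ⟪r i s, deriv (r i) s⟫) (4 * H t) t := by
    intro t
    refine ((HasDerivAt.fun_sum fun i _ => ((hv i t).inner ℝ (ha i t)).const_mul (m i)).const_mul
      2).congr_deriv ?_
    simp only [H, mul_add, sum_add_distrib, sum_mul_inner_self_jacobiAccel m (hinj t),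
      real_inner_self_eq_norm_sq]
    ring
  have hH : ∀ t, HasDerivAt H 0 t := fun t =>
    (((HasDerivAt.sum_mul_norm_sq m (ha · t)).div_const 2).sub
      (hasDerivAt_jacobiPotential m (hv · t) (hinj t))).congr_deriv (by ring)
  refine ⟨fun t => ?_, fun t => ?_⟩
  · rw [hdI]
    exact (hI' t).deriv
  · rw [hdI]
    exact (hasDerivAt_two_mul_mul_sub_half_sq (hI t) (hI' t) (hH t)).deriv

theorem stmt6 {E : Type*} [NormedAddCommGroup E] [InnerProductSpace ℝ E]
    (n : ℕ) (m : Fin n → ℝ) (hm : ∀ i, 0 < m i)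
    (r : Fin n → ℝ → E) (hsm : ∀ i, ContDiff ℝ 2 (r i))
    (hsep : ∀ t, ∀ i j, i ≠ j → r i t ≠ r j t)
    (hcm : ∀ t, ∑ i, m i • r i t = 0)
    (hode : ∀ i t, deriv (deriv (r i)) t
      = ∑ j ∈ Finset.univ.erase i,
          (2 * m j / ‖r i t - r j t‖ ^ 4) • (r j t - r i t)) :
    (∀ t, deriv (deriv (fun s => ∑ i, m i * ‖r i s‖ ^ 2)) t
        = 4 * ((∑ i, m i * ‖deriv (r i) t‖ ^ 2) / 2
            - ∑ i, ∑ j ∈ Finset.univ.filter (fun j => i < j),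
                m i * m j / ‖r i t - r j t‖ ^ 2)) ∧
    (∀ t, deriv (fun s =>
        2 * (∑ i, m i * ‖r i s‖ ^ 2) *
          ((∑ i, m i * ‖deriv (r i) s‖ ^ 2) / 2
            - ∑ i, ∑ j ∈ Finset.univ.filter (fun j => i < j),
                m i * m j / ‖r i s - r j s‖ ^ 2)
        - (deriv (fun u => ∑ i, m i * ‖r i u‖ ^ 2) s / 2) ^ 2) t = 0) :=
  stmt6_general n m r hsm hsep hode
end

section
/- Complex Schwarz inequality: let V be a real inner product space equipped with a linear map J : V → V that is antisymmetric (⟨Jx,y⟩ = −⟨x,Jy⟩) and contractive (‖Jx‖ ≤ ‖x‖ for all x). Then for all x, y ∈ V: ‖x‖²‖y‖² − ⟨x,y⟩² − ⟨Jx,y⟩² ≥ 0. -/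
open scoped RealInnerProductSpace

/-! Project `y` onto the plane spanned by `x` and `J x`: these two vectors are orthogonal and `J x`
is the shorter one, so the Cauchy–Schwarz inequality for the test vector `⟪x, y⟫ • x + ⟪J x, y⟫ • J x`
bounds `⟪x, y⟫ ^ 2 + ⟪J x, y⟫ ^ 2` by `‖x‖ ^ 2 * ‖y‖ ^ 2`. -/

section

variable {V : Type*} [NormedAddCommGroup V] [InnerProductSpace ℝ V]

theorem real_inner_self_apply_eq_zero_of_antisymm (J : V → V) (hanti : ∀ x y, ⟪J x, y⟫ = -⟪x, J y⟫)
    (x : V) : ⟪x, J x⟫ = 0 := by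
  have h := hanti x x
  rw [real_inner_comm] at h
  linarith

theorem real_inner_sq_le_norm_sq_mul_norm_sq (z y : V) : ⟪z, y⟫ ^ 2 ≤ ‖z‖ ^ 2 * ‖y‖ ^ 2 := by
  rw [← mul_pow, ← sq_abs]
  exact pow_le_pow_left₀ (abs_nonneg _) (abs_real_inner_le_norm z y) 2

theorem norm_sq_smul_add_smul_le_of_inner_eq_zero {u v : V} (huv : ⟪u, v⟫ = 0) (hvu : ‖v‖ ≤ ‖u‖)
    (a b : ℝ) : ‖a • u + b • v‖ ^ 2 ≤ (a ^ 2 + b ^ 2) * ‖u‖ ^ 2 := by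
  have horth : ⟪a • u, b • v⟫ = 0 := by
    rw [real_inner_smul_left, real_inner_smul_right, huv, mul_zero, mul_zero]
  rw [norm_add_sq_real, horth, norm_smul, norm_smul, mul_pow, mul_pow, Real.norm_eq_abs,
    Real.norm_eq_abs, sq_abs, sq_abs]
  have : ‖v‖ ^ 2 ≤ ‖u‖ ^ 2 := pow_le_pow_left₀ (norm_nonneg v) hvu 2
  nlinarith [sq_nonneg b]

theorem real_inner_sq_add_real_inner_sq_le_of_inner_eq_zero {u v : V} (huv : ⟪u, v⟫ = 0)
    (hvu : ‖v‖ ≤ ‖u‖) (y : V) : ⟪u, y⟫ ^ 2 + ⟪v, y⟫ ^ 2 ≤ ‖u‖ ^ 2 * ‖y‖ ^ 2 := by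
  set s := ⟪u, y⟫ ^ 2 + ⟪v, y⟫ ^ 2
  have hzy : ⟪⟪u, y⟫ • u + ⟪v, y⟫ • v, y⟫ = s := by
    rw [inner_add_left, real_inner_smul_left, real_inner_smul_left]
    ring
  have hs : s ^ 2 ≤ s * (‖u‖ ^ 2 * ‖y‖ ^ 2) := calc
    s ^ 2 ≤ ‖⟪u, y⟫ • u + ⟪v, y⟫ • v‖ ^ 2 * ‖y‖ ^ 2 :=
      hzy ▸ real_inner_sq_le_norm_sq_mul_norm_sq _ y
    _ ≤ s * ‖u‖ ^ 2 * ‖y‖ ^ 2 := by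
      gcongr
      exact norm_sq_smul_add_smul_le_of_inner_eq_zero huv hvu _ _
    _ = s * (‖u‖ ^ 2 * ‖y‖ ^ 2) := mul_assoc _ _ _
  rcases (show 0 ≤ s by positivity).eq_or_lt with hs0 | hs0
  · rw [← hs0]
    positivity
  · nlinarith

end

theorem stmt9 {V : Type*} [NormedAddCommGroup V] [InnerProductSpace ℝ V]
    (J : V →ₗ[ℝ] V)
    (hanti : ∀ x y, ⟪J x, y⟫ = -⟪x, J y⟫)
    (hcontr : ∀ x, ‖J x‖ ≤ ‖x‖) (x y : V) :
    0 ≤ ‖x‖ ^ 2 * ‖y‖ ^ 2 - ⟪x, y⟫ ^ 2 - ⟪J x, y⟫ ^ 2 := by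
  have := real_inner_sq_add_real_inner_sq_le_of_inner_eq_zero
    (real_inner_self_apply_eq_zero_of_antisymm J hanti x) (hcontr x) y
  linarith
end

section
/- Sundman's inequality: for a state z = (x, y) of the n-body problem with masses m_i, center of mass at origin, I = Σ m_i‖r_i‖², J = Σ m_i⟨r_i, v_i⟩, K = Σ m_i‖v_i‖², and angular momentum bivector C with norm |C| = (1/2)trace√(−(C∘ε)²), one has IK − J² − |C|² ≥ 0. -/
/-!
Write `C` for the angular-momentum matrix and `S = |C|`. Replacing every `vᵢ` by
`wᵢ = vᵢ - c rᵢ` leaves `C` unchanged, and for `c = J / I` one gets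
`I · ∑ mᵢ ‖wᵢ‖² = I K - J²`. The trace of `|C|` is the nuclear norm of `C`, which is subadditive
and at most `‖x‖ ‖y‖` on a rank-one matrix `x yᵀ`; hence `tr S ≤ 2 ∑ mᵢ ‖rᵢ‖ ‖wᵢ‖`, and the
weighted Cauchy–Schwarz inequality bounds the square of the right-hand side by `4 (I K - J²)`.
-/

open scoped RealInnerProductSpace
open Matrix

theorem Orthonormal.abs_sum_inner_mul_inner_le {ι E : Type*} [Fintype ι] [NormedAddCommGroup E]
    [InnerProductSpace ℝ E] {u b : ι → E} (hu : Orthonormal ℝ u) (hb : Orthonormal ℝ b) (x y : E) :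
    |∑ j, ⟪u j, x⟫ * ⟪b j, y⟫| ≤ ‖x‖ * ‖y‖ := by
  have bessel {v : ι → E} (hv : Orthonormal ℝ v) (z : E) : √(∑ j, |⟪v j, z⟫| ^ 2) ≤ ‖z‖ :=
    Real.sqrt_le_iff.mpr
      ⟨norm_nonneg z, by simpa only [Real.norm_eq_abs] using hv.sum_inner_products_le z⟩
  calc |∑ j, ⟪u j, x⟫ * ⟪b j, y⟫|
      ≤ ∑ j, |⟪u j, x⟫| * |⟪b j, y⟫| := by
        simpa only [abs_mul] using Finset.abs_sum_le_sum_abs (fun j => ⟪u j, x⟫ * ⟪b j, y⟫) _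
    _ ≤ √(∑ j, |⟪u j, x⟫| ^ 2) * √(∑ j, |⟪b j, y⟫| ^ 2) := Real.sum_mul_le_sqrt_mul_sqrt _ _ _
    _ ≤ ‖x‖ * ‖y‖ := mul_le_mul (bessel hu x) (bessel hb y) (Real.sqrt_nonneg _) (norm_nonneg _)

namespace Matrix

theorem dotProduct_mulVec_mulVec_eq_of_transpose_mul_self_eq {m n R : Type*} [Fintype m]
    [Fintype n] [CommSemiring R] {A B : Matrix m n R} (h : Aᵀ * A = Bᵀ * B) (x y : n → R) :
    (A *ᵥ x) ⬝ᵥ (A *ᵥ y) = (B *ᵥ x) ⬝ᵥ (B *ᵥ y) := by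
  have gram (M : Matrix m n R) : (M *ᵥ x) ⬝ᵥ (M *ᵥ y) = x ⬝ᵥ ((Mᵀ * M) *ᵥ y) := by
    rw [← mulVec_mulVec, dotProduct_mulVec x, vecMul_transpose]
  rw [gram, gram, h]

variable {n : Type*} [Fintype n] [DecidableEq n]

theorem IsHermitian.dotProduct_mulVec_eigenvectorBasis {S C : Matrix n n ℝ} (hS : S.IsHermitian)
    (hSC : S * S = Cᵀ * C) (j k : n) :
    (C *ᵥ hS.eigenvectorBasis j) ⬝ᵥ (C *ᵥ hS.eigenvectorBasis k) =
      hS.eigenvalues j * hS.eigenvalues k * ⟪hS.eigenvectorBasis k, hS.eigenvectorBasis j⟫ := by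
  have hSt : Sᵀ = S := by simpa using hS.eq
  rw [← dotProduct_mulVec_mulVec_eq_of_transpose_mul_self_eq (by rw [hSt]; exact hSC),
    hS.mulVec_eigenvectorBasis, hS.mulVec_eigenvectorBasis, smul_dotProduct, dotProduct_smul,
    EuclideanSpace.inner_eq_star_dotProduct]
  simp only [star_trivial, smul_eq_mul]
  ring

/-- `φ X = tr (Uᵀ X)` for the partial isometry `U` of the polar decomposition `C = U S`: on the
eigenvectors `bⱼ` of `S` with `μⱼ ≠ 0` it sends `bⱼ` to `C bⱼ / μⱼ`, and these images are
orthonormal because `⟪C x, C y⟫ = ⟪S x, S y⟫`. -/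
theorem PosSemidef.exists_functional_eq_trace {S C : Matrix n n ℝ} (hS : S.PosSemidef)
    (hSC : S * S = Cᵀ * C) :
    ∃ φ : Matrix n n ℝ →ₗ[ℝ] ℝ, φ C = S.trace ∧
      ∀ x y : EuclideanSpace ℝ n, |φ (vecMulVec x.ofLp y.ofLp)| ≤ ‖x‖ * ‖y‖ := by
  have gram := hS.isHermitian.dotProduct_mulVec_eigenvectorBasis hSC
  set b := hS.isHermitian.eigenvectorBasis
  set μ := hS.isHermitian.eigenvalues
  let ι := {j // μ j ≠ 0}
  let u : ι → EuclideanSpace ℝ n := fun j => (μ j)⁻¹ • WithLp.toLp 2 (C *ᵥ b j)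
  have hb : Orthonormal ℝ fun j : ι => b j := b.orthonormal.comp _ Subtype.val_injective
  have hu : Orthonormal ℝ u := by
    rw [orthonormal_iff_ite] at hb ⊢
    intro j k
    rw [← hb j k]
    simp only [u, inner_smul_left, inner_smul_right, EuclideanSpace.inner_toLp_toLp, star_trivial,
      gram, conj_trivial]
    field_simp [j.2, k.2]
  let φ : Matrix n n ℝ →ₗ[ℝ] ℝ :=
    { toFun := fun X => ∑ j : ι, ⟪u j, WithLp.toLp 2 (X *ᵥ b j)⟫
      map_add' := fun X Y => by
        simp only [add_mulVec, WithLp.toLp_add, inner_add_right, Finset.sum_add_distrib]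
      map_smul' := fun c X => by
        simp only [smul_mulVec, WithLp.toLp_smul, inner_smul_right, Finset.mul_sum, smul_eq_mul,
          RingHom.id_apply] }
  refine ⟨φ, ?_, fun x y => ?_⟩
  · calc φ C = ∑ j : ι, μ j := Fintype.sum_congr _ _ fun j => by
          simp only [u, inner_smul_left, EuclideanSpace.inner_toLp_toLp, star_trivial, gram,
            conj_trivial, real_inner_self_eq_norm_sq, b.orthonormal.1 j, one_pow, mul_one]
          field_simp [j.2]
      _ = ∑ j, μ j := by
          rw [← Finset.sum_subtype _ (fun _ => Finset.mem_filter_univ _) μ,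
            Finset.sum_filter_ne_zero]
      _ = S.trace := by simp [μ, hS.isHermitian.trace_eq_sum_eigenvalues]
  · have hφ : φ (vecMulVec x.ofLp y.ofLp) = ∑ j : ι, ⟪u j, x⟫ * ⟪b j, y⟫ := by
      simp [φ, vecMulVec_mulVec, EuclideanSpace.inner_eq_star_dotProduct, mul_comm]
    rw [hφ]
    exact hu.abs_sum_inner_mul_inner_le hb x y

end Matrix

section WeightedSums

variable {ι E : Type*} [Fintype ι] [NormedAddCommGroup E] [InnerProductSpace ℝ E]

theorem sq_sum_mul_mul_le {m : ι → ℝ} (hm : ∀ i, 0 ≤ m i) (a b : ι → ℝ) :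
    (∑ i, m i * (a i * b i)) ^ 2 ≤ (∑ i, m i * a i ^ 2) * ∑ i, m i * b i ^ 2 :=
  Finset.sum_sq_le_sum_mul_sum_of_sq_le_mul _ (fun i _ => mul_nonneg (hm i) (sq_nonneg _))
    (fun i _ => mul_nonneg (hm i) (sq_nonneg _)) fun i _ => le_of_eq (by ring)

theorem sq_sum_inner_le {m : ι → ℝ} (hm : ∀ i, 0 ≤ m i) (x y : ι → E) :
    (∑ i, m i * ⟪x i, y i⟫) ^ 2 ≤ (∑ i, m i * ‖x i‖ ^ 2) * ∑ i, m i * ‖y i‖ ^ 2 :=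
  Finset.sum_sq_le_sum_mul_sum_of_sq_le_mul _ (fun i _ => mul_nonneg (hm i) (sq_nonneg _))
    (fun i _ => mul_nonneg (hm i) (sq_nonneg _)) fun i _ => by
      have h : ⟪x i, y i⟫ ^ 2 ≤ (‖x i‖ * ‖y i‖) ^ 2 := by
        simpa using pow_le_pow_left₀ (abs_nonneg _) (abs_real_inner_le_norm (x i) (y i)) 2
      calc (m i * ⟪x i, y i⟫) ^ 2 = m i ^ 2 * ⟪x i, y i⟫ ^ 2 := by ring
        _ ≤ m i ^ 2 * (‖x i‖ * ‖y i‖) ^ 2 := by gcongr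
        _ = m i * ‖x i‖ ^ 2 * (m i * ‖y i‖ ^ 2) := by ring

theorem sum_mul_norm_sub_smul_sq (m : ι → ℝ) (x y : ι → E) (c : ℝ) :
    ∑ i, m i * ‖y i - c • x i‖ ^ 2 =
      ∑ i, m i * ‖y i‖ ^ 2 - 2 * c * ∑ i, m i * ⟪x i, y i⟫ + c ^ 2 * ∑ i, m i * ‖x i‖ ^ 2 := by
  simp only [norm_sub_sq_real, inner_smul_right, norm_smul, mul_pow, Real.norm_eq_abs, sq_abs,
    real_inner_comm (x _), Finset.mul_sum, ← Finset.sum_sub_distrib, ← Finset.sum_add_distrib]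
  exact Fintype.sum_congr _ _ fun i => by ring

end WeightedSums

section AngularMomentum

variable {ι n : Type*} [Fintype ι]

def angularMomentum (m : ι → ℝ) (r v : ι → EuclideanSpace ℝ n) : Matrix n n ℝ :=
  Matrix.of fun j k => ∑ i, m i * (r i j * v i k - r i k * v i j)

theorem angularMomentum_eq_sum (m : ι → ℝ) (r v : ι → EuclideanSpace ℝ n) :
    angularMomentum m r v =
      ∑ i, m i • (vecMulVec (r i).ofLp (v i).ofLp - vecMulVec (v i).ofLp (r i).ofLp) := by
  ext j k
  simp only [angularMomentum, of_apply, Matrix.sum_apply, Matrix.smul_apply, Matrix.sub_apply,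
    vecMulVec_apply, smul_eq_mul]
  exact Fintype.sum_congr _ _ fun i => by ring

theorem transpose_angularMomentum (m : ι → ℝ) (r v : ι → EuclideanSpace ℝ n) :
    (angularMomentum m r v)ᵀ = -angularMomentum m r v := by
  ext j k
  simp only [angularMomentum, transpose_apply, of_apply, Matrix.neg_apply,
    ← Finset.sum_neg_distrib]
  exact Fintype.sum_congr _ _ fun i => by ring

theorem angularMomentum_sub_smul (m : ι → ℝ) (r v : ι → EuclideanSpace ℝ n) (c : ℝ) :
    angularMomentum m r (fun i => v i - c • r i) = angularMomentum m r v := by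
  ext j k
  simp only [angularMomentum, of_apply, PiLp.sub_apply, PiLp.smul_apply, smul_eq_mul]
  exact Fintype.sum_congr _ _ fun i => by ring

theorem Matrix.PosSemidef.trace_le_of_mul_self_eq_neg_angularMomentum [Fintype n] [DecidableEq n]
    {m : ι → ℝ} (hm : ∀ i, 0 ≤ m i) {r v : ι → EuclideanSpace ℝ n} {S : Matrix n n ℝ}
    (hS : S.PosSemidef) (hSL : S * S = -(angularMomentum m r v * angularMomentum m r v)) :
    S.trace ≤ 2 * ∑ i, m i * (‖r i‖ * ‖v i‖) := by
  obtain ⟨φ, hφL, hφ⟩ := hS.exists_functional_eq_trace (C := angularMomentum m r v)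
    (by rw [transpose_angularMomentum, neg_mul, hSL])
  calc S.trace = ∑ i, m i *
        (φ (vecMulVec (r i).ofLp (v i).ofLp) - φ (vecMulVec (v i).ofLp (r i).ofLp)) := by
        rw [← hφL, angularMomentum_eq_sum]
        simp [map_sum, map_smul, map_sub]
    _ ≤ ∑ i, m i * (2 * (‖r i‖ * ‖v i‖)) := by
        gcongr with i
        · exact hm i
        · linarith [abs_le.mp (hφ (r i) (v i)), abs_le.mp (hφ (v i) (r i))]
    _ = 2 * ∑ i, m i * (‖r i‖ * ‖v i‖) := by rw [Finset.mul_sum]; ring_nf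

end AngularMomentum

theorem stmt11_general (d n : ℕ) (m : Fin n → ℝ) (hm : ∀ i, 0 < m i)
    (r v : Fin n → EuclideanSpace ℝ (Fin d)) :
    ∀ S : Matrix (Fin d) (Fin d) ℝ, S.PosSemidef →
      S * S = -((Matrix.of fun j k => ∑ i, m i * (r i j * v i k - r i k * v i j)) *
          (Matrix.of fun j k => ∑ i, m i * (r i j * v i k - r i k * v i j))) →
      0 ≤ (∑ i, m i * ‖r i‖ ^ 2) * (∑ i, m i * ‖v i‖ ^ 2)
          - (∑ i, m i * ⟪r i, v i⟫) ^ 2 - ((1/2) * S.trace) ^ 2 := by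
  intro S hS hSL
  have hm₀ i : 0 ≤ m i := (hm i).le
  set I := ∑ i, m i * ‖r i‖ ^ 2
  set J := ∑ i, m i * ⟪r i, v i⟫
  set K := ∑ i, m i * ‖v i‖ ^ 2
  have hJ : J / I * I = J := by
    rcases eq_or_ne I 0 with hI | hI
    · have hJ2 : J ^ 2 ≤ I * K := sq_sum_inner_le hm₀ r v
      rw [hI, zero_mul, sq_nonpos_iff] at hJ2
      simp [hI, hJ2]
    · exact div_mul_cancel₀ J hI
  set w := fun i => v i - (J / I) • r i
  have htrace : S.trace ≤ 2 * ∑ i, m i * (‖r i‖ * ‖w i‖) :=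
    hS.trace_le_of_mul_self_eq_neg_angularMomentum hm₀ (by rwa [angularMomentum_sub_smul])
  have hw : I * ∑ i, m i * ‖w i‖ ^ 2 = I * K - J ^ 2 := by
    rw [sum_mul_norm_sub_smul_sq]
    linear_combination (J / I * I - J) * hJ
  have hsq : ((1/2) * S.trace) ^ 2 ≤ (∑ i, m i * (‖r i‖ * ‖w i‖)) ^ 2 :=
    pow_le_pow_left₀ (by linarith [hS.trace_nonneg]) (by linarith) 2
  linarith [(sq_sum_mul_mul_le hm₀ (fun i => ‖r i‖) (fun i => ‖w i‖)).trans_eq hw]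

theorem stmt11 (d n : ℕ) (m : Fin n → ℝ) (hm : ∀ i, 0 < m i)
    (r v : Fin n → EuclideanSpace ℝ (Fin d))
    (hcm : ∑ i, m i • r i = 0) (hcv : ∑ i, m i • v i = 0) :
    ∀ S : Matrix (Fin d) (Fin d) ℝ, S.PosSemidef →
      S * S = -((Matrix.of fun j k => ∑ i, m i * (r i j * v i k - r i k * v i j)) *
          (Matrix.of fun j k => ∑ i, m i * (r i j * v i k - r i k * v i j))) →
      0 ≤ (∑ i, m i * ‖r i‖ ^ 2) * (∑ i, m i * ‖v i‖ ^ 2)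
          - (∑ i, m i * ⟪r i, v i⟫) ^ 2 - ((1/2) * S.trace) ^ 2 :=
  stmt11_general d n m hm r v
end

section
/- A configuration x is balanced ([A, μ∘β] = 0 where β = ᵗx∘ε∘x, A the Wintner–Conley operator) if and only if there exists a symmetric operator Σ : E → E* such that ∇U(x) = ε⁻¹∘Σ∘x, where ∇U(x) = 2x∘A. -/
/-!
Since `μ` is invertible and `μ Aᵀ = A μ`, the operator `A` commutes with `μ β` exactly when `β A`
is symmetric. With `y = ε x A` one has `β A = xᵀ y`, so balance means `xᵀ y = yᵀ x`; positivity of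
`ε` then also gives `ker x ⊆ ker y`. These two conditions are precisely what makes `y = S x`
solvable with `S` symmetric: let `L` send `x u` to `y u` on the range of `x` and vanish on its
orthogonal complement, and symmetrize it to `L + Lᵀ (1 - P)`, `P` the orthogonal projection onto
the range of `x`.
-/

open Matrix

section SymmetricFactorization

variable {𝕜 E V : Type*} [RCLike 𝕜] [NormedAddCommGroup E] [InnerProductSpace 𝕜 E]
  [FiniteDimensional 𝕜 E] [AddCommGroup V] [Module 𝕜 V]

open LinearMap

theorem LinearMap.exists_comp_eq_and_comp_starProjection_eq {f g : V →ₗ[𝕜] E}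
    (hker : ker f ≤ ker g) :
    ∃ L : E →ₗ[𝕜] E, L ∘ₗ f = g ∧ L ∘ₗ (range f).starProjection.toLinearMap = L := by
  let h : range f →ₗ[𝕜] E := (ker f).liftQ g hker ∘ₗ f.quotKerEquivRange.symm.toLinearMap
  refine ⟨h ∘ₗ (range f).orthogonalProjectionOnto.toLinearMap, ?_, ?_⟩
  · ext u
    have hPf : (range f).orthogonalProjectionOnto (f u) = ⟨f u, mem_range_self f u⟩ :=
      Submodule.orthogonalProjectionOnto_mem_subspace_eq_self ⟨f u, mem_range_self f u⟩
    simp [h, hPf, quotKerEquivRange_symm_apply_image]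
  · ext a
    simp only [coe_comp, ContinuousLinearMap.coe_coe, Function.comp_apply,
      Submodule.starProjection, ContinuousLinearMap.comp_apply, Submodule.subtypeL_apply,
      Submodule.orthogonalProjectionOnto_mem_subspace_eq_self]

theorem LinearMap.exists_isSymmetric_comp_eq {f g : V →ₗ[𝕜] E} (hker : ker f ≤ ker g)
    (hsym : ∀ u v, inner 𝕜 (f u) (g v) = inner 𝕜 (g u) (f v)) :
    ∃ T : E →ₗ[𝕜] E, T.IsSymmetric ∧ T ∘ₗ f = g := by
  obtain ⟨L, hLf, hLP⟩ := exists_comp_eq_and_comp_starProjection_eq hker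
  set P : E →ₗ[𝕜] E := (range f).starProjection.toLinearMap
  have hLP' (a : E) : L (P a) = L a := LinearMap.congr_fun hLP a
  have hcompr (a b : E) : inner 𝕜 (P a) (L b) = inner 𝕜 (L a) (P b) := by
    obtain ⟨u, hu⟩ : ∃ u, f u = P a := mem_range.1 ((range f).starProjection_apply_mem a)
    obtain ⟨v, hv⟩ : ∃ v, f v = P b := mem_range.1 ((range f).starProjection_apply_mem b)
    rw [← hLP' a, ← hLP' b, ← hu, ← hv]
    simpa only [← comp_apply, hLf] using hsym u v
  -- `L + L† (1 - P)` is symmetric because the compression `P L P` is, by `hsym`.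
  refine ⟨L + adjoint L ∘ₗ (id - P), fun a b => ?_, ?_⟩
  · simp only [add_apply, comp_apply, sub_apply, id_apply, inner_add_left, inner_add_right,
      adjoint_inner_left, adjoint_inner_right, inner_sub_left, inner_sub_right, hcompr]
    ring
  · ext u
    have hPf : P (f u) = f u := (range f).starProjection_eq_self_iff.2 (mem_range_self f u)
    simp [hPf, ← hLf]

end SymmetricFactorization

theorem Matrix.exists_isHermitian_mul_eq {𝕜 m n : Type*} [RCLike 𝕜] [Fintype m] [DecidableEq m]
    [Fintype n] [DecidableEq n] {x y : Matrix m n 𝕜} (hker : ∀ u, x *ᵥ u = 0 → y *ᵥ u = 0)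
    (hsym : xᴴ * y = yᴴ * x) :
    ∃ S : Matrix m m 𝕜, S.IsHermitian ∧ S * x = y := by
  have inner_toEuclideanLin (z w : Matrix m n 𝕜) (u v : EuclideanSpace 𝕜 n) :
      inner 𝕜 (toEuclideanLin z u) (toEuclideanLin w v) =
        inner 𝕜 u (toEuclideanLin (zᴴ * w) v) := by
    rw [toLpLin_mul_same, toEuclideanLin_conjTranspose_eq_adjoint, LinearMap.comp_apply,
      LinearMap.adjoint_inner_right]
  have hker' : LinearMap.ker (toEuclideanLin x) ≤ LinearMap.ker (toEuclideanLin y) := by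
    intro u hu
    simp only [LinearMap.mem_ker, toLpLin_apply, WithLp.toLp_eq_zero] at hu ⊢
    exact hker _ hu
  obtain ⟨T, hT, hTxy⟩ := LinearMap.exists_isSymmetric_comp_eq hker' fun u v => by
    rw [inner_toEuclideanLin, inner_toEuclideanLin, hsym]
  refine ⟨toEuclideanLin.symm T, ?_, toEuclideanLin.injective ?_⟩
  · rwa [← isSymmetric_toEuclideanLin_iff, LinearEquiv.apply_symm_apply]
  · rw [toLpLin_mul_same, LinearEquiv.apply_symm_apply, hTxy]

namespace Matrix

variable {m n : Type*} [Fintype m]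

theorem PosDef.isSymm_transpose_mul_mul_same {ε : Matrix m m ℝ} (hε : ε.PosDef)
    (x : Matrix m n ℝ) : (xᵀ * ε * x).IsSymm := by
  simpa using isHermitian_conjTranspose_mul_mul x hε.isHermitian

variable [Fintype n]

theorem PosDef.conjTranspose_mul_mul_same_mulVec_eq_zero_iff {R : Type*} [CommRing R]
    [PartialOrder R] [StarRing R] {ε : Matrix m m R} (hε : ε.PosDef) (x : Matrix m n R)
    (v : n → R) : (xᴴ * ε * x) *ᵥ v = 0 ↔ x *ᵥ v = 0 := by
  refine ⟨fun hv => ?_, fun hv => by rw [← mulVec_mulVec, hv, mulVec_zero]⟩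
  by_contra hxv
  have hquad : star v ⬝ᵥ (xᴴ * ε * x) *ᵥ v = star (x *ᵥ v) ⬝ᵥ ε *ᵥ (x *ᵥ v) := by
    rw [Matrix.mul_assoc, ← mulVec_mulVec, dotProduct_mulVec, ← star_mulVec, mulVec_mulVec]
  have hpos := hε.dotProduct_mulVec_pos hxv
  rw [← hquad, hv, dotProduct_zero] at hpos
  exact lt_irrefl 0 hpos

theorem mul_mul_eq_mul_mul_iff_isSymm_mul {R : Type*} [CommRing R] [DecidableEq n]
    {μ A β : Matrix n n R} (hμ : IsUnit μ) (hA : μ * Aᵀ = A * μ) (hβ : β.IsSymm) :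
    A * (μ * β) = μ * β * A ↔ (β * A).IsSymm := by
  rw [IsSymm, transpose_mul, hβ.eq, ← Matrix.mul_assoc, ← hA, Matrix.mul_assoc,
    Matrix.mul_assoc, hμ.mul_right_inj, eq_comm]

variable [DecidableEq m] [DecidableEq n]

theorem PosDef.isSymm_transpose_mul_mul_mul_iff {ε : Matrix m m ℝ} (hε : ε.PosDef)
    (x : Matrix m n ℝ) (A : Matrix n n ℝ) :
    (xᵀ * ε * x * A).IsSymm ↔ ∃ S : Matrix m m ℝ, S.IsSymm ∧ S * x = ε * x * A := by
  have hker (v : n → ℝ) : (xᵀ * ε * x) *ᵥ v = 0 ↔ x *ᵥ v = 0 := by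
    simpa using hε.conjTranspose_mul_mul_same_mulVec_eq_zero_iff x v
  have hεs : εᵀ = ε := by simpa using hε.isHermitian.eq
  have hβ := hε.isSymm_transpose_mul_mul_same x
  constructor
  · intro h
    have hAu (u : n → ℝ) (hu : x *ᵥ u = 0) : x *ᵥ (A *ᵥ u) = 0 := by
      rw [← hker, mulVec_mulVec, ← h.eq, transpose_mul, hβ.eq, ← mulVec_mulVec, (hker u).2 hu,
        mulVec_zero]
    obtain ⟨S, hS, hSx⟩ := exists_isHermitian_mul_eq (x := x) (y := ε * x * A)
      (fun u hu => by rw [← mulVec_mulVec, ← mulVec_mulVec, hAu u hu, mulVec_zero])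
      (by simpa [Matrix.mul_assoc, hεs] using h.eq.symm)
    exact ⟨S, isHermitian_iff_isSymm.1 hS, hSx⟩
  · rintro ⟨S, hS, hSx⟩
    rw [Matrix.mul_assoc _ x, Matrix.mul_assoc, ← Matrix.mul_assoc ε, ← hSx, IsSymm]
    simp [transpose_mul, hS.eq, Matrix.mul_assoc]

end Matrix

theorem stmt18_general (d k : ℕ) (x : Matrix (Fin d) (Fin k) ℝ)
    (μ : Matrix (Fin k) (Fin k) ℝ) (ε : Matrix (Fin d) (Fin d) ℝ)
    (hμ : μ.PosDef) (hε : ε.PosDef)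
    (A : Matrix (Fin k) (Fin k) ℝ) (hA : μ * Aᵀ = A * μ) :
    A * (μ * (xᵀ * ε * x)) = (μ * (xᵀ * ε * x)) * A ↔
      ∃ Sg : Matrix (Fin d) (Fin d) ℝ, Sgᵀ = Sg ∧
        (2 : ℝ) • (x * A) = ε⁻¹ * Sg * x := by
  have : Invertible ε := hε.isUnit.invertible
  have hscale (S : Matrix (Fin d) (Fin d) ℝ) :
      (2 : ℝ) • (x * A) = ε⁻¹ * ((2 : ℝ) • S) * x ↔ S * x = ε * x * A := by
    rw [eq_comm, Matrix.mul_assoc, inv_mul_eq_iff_eq_mul_of_invertible, smul_mul, Matrix.mul_smul,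
      smul_right_inj two_ne_zero, Matrix.mul_assoc ε]
  rw [mul_mul_eq_mul_mul_iff_isSymm_mul hμ.isUnit hA
    (hε.isSymm_transpose_mul_mul_same x), hε.isSymm_transpose_mul_mul_mul_iff]
  constructor
  · rintro ⟨S, hS, hSx⟩
    exact ⟨(2 : ℝ) • S, IsSymm.smul hS _, (hscale S).2 hSx⟩
  · rintro ⟨Sg, hSg, hSgx⟩
    refine ⟨(2 : ℝ)⁻¹ • Sg, IsSymm.smul hSg _, (hscale _).1 ?_⟩
    rwa [smul_inv_smul₀ two_ne_zero]

theorem stmt18 (d k : ℕ) (x : Matrix (Fin d) (Fin k) ℝ)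
    (μ : Matrix (Fin k) (Fin k) ℝ) (ε : Matrix (Fin d) (Fin d) ℝ)
    (hμ : μ.PosDef) (hμs : μᵀ = μ) (hε : ε.PosDef) (hεs : εᵀ = ε)
    (A : Matrix (Fin k) (Fin k) ℝ) (hA : μ * Aᵀ = A * μ) :
    A * (μ * (xᵀ * ε * x)) = (μ * (xᵀ * ε * x)) * A ↔
      ∃ Sg : Matrix (Fin d) (Fin d) ℝ, Sgᵀ = Sg ∧
        (2 : ℝ) • (x * A) = ε⁻¹ * Sg * x :=
  stmt18_general d k x μ ε hμ hε A hA
end
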